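/- Let A, B be self-adjoint involutions on a Hilbert space H and ψ a unit vector with ABψ = -BAψ. Define on H ⊗ ℂ² the 'swap' unitary U = (ctrl-A)(H₂ ctrl-B H₂)(ctrl-A), where ctrl-M = |0⟩⟨0|⊗I + |1⟩⟨1|⊗M acts with control on the ℂ² factor and H₂ is Hadamard on the control. Then U (A ψ ⊗ |+⟩) = X_anc U (ψ ⊗ |+⟩), i.e. applying A before the swap circuit equals applying Pauli X on the ancilla after. -/
import Mathlib


open TensorProduct

/-- Projector `|0⟩⟨0|` on the qubit `Fin 2 → ℂ`. -/
noncomputable def P0 : (Fin 2 → ℂ) →ₗ[ℂ] (Fin 2 → ℂ) :=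
  Matrix.toLin' !![(1 : ℂ), 0; 0, 0]

/-- Projector `|1⟩⟨1|` on the qubit `Fin 2 → ℂ`. -/
noncomputable def P1 : (Fin 2 → ℂ) →ₗ[ℂ] (Fin 2 → ℂ) :=
  Matrix.toLin' !![(0 : ℂ), 0; 0, 1]

/-- Hadamard gate on the qubit. -/
noncomputable def Hgate : (Fin 2 → ℂ) →ₗ[ℂ] (Fin 2 → ℂ) :=
  Matrix.toLin' ((Real.sqrt 2 : ℂ)⁻¹ • !![(1 : ℂ), 1; 1, -1])

/-- Pauli X on the qubit. -/
noncomputable def Xgate : (Fin 2 → ℂ) →ₗ[ℂ] (Fin 2 → ℂ) :=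
  Matrix.toLin' !![(0 : ℂ), 1; 1, 0]

/-- Pauli Z on the qubit. -/
noncomputable def Zgate : (Fin 2 → ℂ) →ₗ[ℂ] (Fin 2 → ℂ) :=
  Matrix.toLin' !![(1 : ℂ), 0; 0, -1]

/-- The `|+⟩` state. -/
noncomputable def plusState : Fin 2 → ℂ := fun _ => (Real.sqrt 2 : ℂ)⁻¹

variable {H : Type*} [NormedAddCommGroup H] [InnerProductSpace ℂ H]

/-- Controlled-`M` gate on `H ⊗ ℂ²` with control on the ancilla (`ℂ²`) factor:
`|0⟩⟨0| ⊗ I + |1⟩⟨1| ⊗ M` (ancilla written second). -/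
noncomputable def ctrl (M : H →ₗ[ℂ] H) : (H ⊗[ℂ] (Fin 2 → ℂ)) →ₗ[ℂ] (H ⊗[ℂ] (Fin 2 → ℂ)) :=
  TensorProduct.map LinearMap.id P0 + TensorProduct.map M P1

/-- A gate acting only on the ancilla qubit. -/
noncomputable def onAnc (M : (Fin 2 → ℂ) →ₗ[ℂ] (Fin 2 → ℂ)) :
    (H ⊗[ℂ] (Fin 2 → ℂ)) →ₗ[ℂ] (H ⊗[ℂ] (Fin 2 → ℂ)) :=
  TensorProduct.map LinearMap.id M

/-- The swap circuit `(ctrl-A)(H₂ ctrl-B H₂)(ctrl-A)`: first ctrl-A, then Hadamard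
on the ancilla, then ctrl-B, then Hadamard on the ancilla, then ctrl-A. -/
noncomputable def swapCircuit (A B : H →ₗ[ℂ] H) :
    (H ⊗[ℂ] (Fin 2 → ℂ)) →ₗ[ℂ] (H ⊗[ℂ] (Fin 2 → ℂ)) :=
  ctrl A ∘ₗ onAnc Hgate ∘ₗ ctrl B ∘ₗ onAnc Hgate ∘ₗ ctrl A

noncomputable def cC : ℂ := (Real.sqrt 2 : ℂ)⁻¹
def qe0 : Fin 2 → ℂ := ![1, 0]
def qe1 : Fin 2 → ℂ := ![0, 1]

lemma P0_e0 : P0 qe0 = qe0 := by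
  funext i; fin_cases i <;>
    simp [P0, qe0, Matrix.toLin'_apply, Matrix.mulVec, dotProduct, Fin.sum_univ_two]

lemma P0_e1 : P0 qe1 = 0 := by
  funext i; fin_cases i <;>
    simp [P0, qe1, Matrix.toLin'_apply, Matrix.mulVec, dotProduct, Fin.sum_univ_two]

lemma P1_e0 : P1 qe0 = 0 := by
  funext i; fin_cases i <;>
    simp [P1, qe0, Matrix.toLin'_apply, Matrix.mulVec, dotProduct, Fin.sum_univ_two]

lemma P1_e1 : P1 qe1 = qe1 := by
  funext i; fin_cases i <;>
    simp [P1, qe1, Matrix.toLin'_apply, Matrix.mulVec, dotProduct, Fin.sum_univ_two]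

lemma X_e0 : Xgate qe0 = qe1 := by
  funext i; fin_cases i <;>
    simp [Xgate, qe0, qe1, Matrix.toLin'_apply, Matrix.mulVec, dotProduct, Fin.sum_univ_two]

lemma X_e1 : Xgate qe1 = qe0 := by
  funext i; fin_cases i <;>
    simp [Xgate, qe0, qe1, Matrix.toLin'_apply, Matrix.mulVec, dotProduct, Fin.sum_univ_two]

lemma H_e0 : Hgate qe0 = cC • qe0 + cC • qe1 := by
  funext i; fin_cases i <;>
    simp [Hgate, cC, qe0, qe1, Matrix.toLin'_apply, Matrix.mulVec, dotProduct,
      Fin.sum_univ_two, Matrix.smul_apply]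

lemma H_e1 : Hgate qe1 = cC • qe0 - cC • qe1 := by
  funext i; fin_cases i <;>
    simp [Hgate, cC, qe0, qe1, Matrix.toLin'_apply, Matrix.mulVec, dotProduct,
      Fin.sum_univ_two, Matrix.smul_apply]

lemma plus_eq : plusState = cC • qe0 + cC • qe1 := by
  funext i; fin_cases i <;> simp [plusState, cC, qe0, qe1]

/-- Applying `A` before the swap circuit equals applying Pauli X on the ancilla
after: `U (A ψ ⊗ |+⟩) = X_anc U (ψ ⊗ |+⟩)`. -/
theorem swapCircuit_A_eq_Xanc
    (A B : H →ₗ[ℂ] H) (hA : A.IsSymmetric) (hB : B.IsSymmetric)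
    (hA2 : A ∘ₗ A = LinearMap.id) (hB2 : B ∘ₗ B = LinearMap.id)
    (ψ : H) (hψ : ‖ψ‖ = 1) (hAB : A (B ψ) = -(B (A ψ))) :
    swapCircuit A B ((A ψ) ⊗ₜ[ℂ] plusState) =
      onAnc Xgate (swapCircuit A B (ψ ⊗ₜ[ℂ] plusState)) := by
  have hAA : ∀ x : H, A (A x) = x := fun x => by
    have := LinearMap.ext_iff.mp hA2 x; simpa using this
  have hABA : A (B (A ψ)) = -(B ψ) := by
    have h := congrArg A hAB
    rw [hAA, map_neg] at h
    rw [h, neg_neg]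
  simp only [swapCircuit, ctrl, onAnc, LinearMap.comp_apply, LinearMap.add_apply,
    TensorProduct.map_tmul, LinearMap.id_apply, plus_eq, tmul_add, tmul_smul,
    map_add, map_smul, map_neg, map_sub, P0_e0, P0_e1, P1_e0, P1_e1, H_e0, H_e1,
    X_e0, X_e1, smul_add, smul_sub, tmul_sub, tmul_zero, tmul_neg, hAA, hABA, hAB,
    neg_tmul, smul_zero, add_zero, zero_add, smul_neg]
  module
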